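/- arXiv:1311.0501 — 5 statements merged into one kernel-verified Lean document; each statement's English description precedes it below -/
import Mathlib

section
/- If σ is a non-decreasing function on [0, Λ] with moments b_k and ξ_0,…,ξ_r (r ≤ m−1) are complex numbers such that Σ_{j,k=0}^r b_{j+k} ξ_k conj(ξ_j) = 0, then Σ_{j,k=0}^r b_{j+k+2} ξ_k conj(ξ_j) = 0. -/
/-! On `[0, Λ]` the Hankel form is `∫ |P|² dσ` with `P(t) = ∑ ξₖ tᵏ`, and the shifted one is
`∫ t² |P|² dσ`. If the first vanishes, then `|P|² = 0` σ-almost everywhere on `[0, Λ]`, so the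
second vanishes as well. -/

open MeasureTheory ComplexConjugate

lemma setIntegral_mul_eq_zero_of_setIntegral_eq_zero {α : Type*} [MeasurableSpace α]
    {μ : Measure α} {s : Set α} {p : α → ℝ} (hp : 0 ≤ p) (hpi : IntegrableOn p s μ)
    (h : ∫ x in s, p x ∂μ = 0) (g : α → ℝ) : ∫ x in s, g x * p x ∂μ = 0 := by
  have hp0 : p =ᵐ[μ.restrict s] 0 := (integral_eq_zero_iff_of_nonneg hp hpi).mp h
  refine integral_eq_zero_of_ae ?_
  filter_upwards [hp0] with x hx
  simp [hx]

lemma sum_sum_pow_mul_mul_conj {n : ℕ} (ξ : Fin n → ℂ) (c : ℕ) (t : ℝ) :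
    ∑ j : Fin n, ∑ k : Fin n, (t : ℂ) ^ ((j : ℕ) + (k : ℕ) + c) * ξ k * conj (ξ j) =
      ((t ^ c * ‖∑ k : Fin n, ξ k * (t : ℂ) ^ (k : ℕ)‖ ^ 2 : ℝ) : ℂ) := by
  simp only [Complex.ofReal_mul, Complex.ofReal_pow]
  rw [← Complex.mul_conj', map_sum, Finset.sum_mul_sum, Finset.mul_sum, Finset.sum_comm]
  refine Finset.sum_congr rfl fun j _ => ?_
  rw [Finset.mul_sum]
  refine Finset.sum_congr rfl fun k _ => ?_
  rw [map_mul, map_pow, Complex.conj_ofReal]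
  ring

lemma hankelForm_eq_setIntegral (μ : Measure ℝ) [IsFiniteMeasureOnCompacts μ] {s : Set ℝ}
    (hs : IsCompact s) {n : ℕ} (ξ : Fin n → ℂ) (c : ℕ) :
    ∑ j : Fin n, ∑ k : Fin n,
        ((∫ t in s, t ^ ((j : ℕ) + (k : ℕ) + c) ∂μ : ℝ) : ℂ) * ξ k * conj (ξ j) =
      ((∫ t in s, t ^ c * ‖∑ k : Fin n, ξ k * (t : ℂ) ^ (k : ℕ)‖ ^ 2 ∂μ : ℝ) : ℂ) := by
  have hint : ∀ j k : Fin n, IntegrableOn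
      (fun t : ℝ => (t : ℂ) ^ ((j : ℕ) + (k : ℕ) + c) * ξ k * conj (ξ j)) s μ := fun j k =>
    (by fun_prop : Continuous _).continuousOn.integrableOn_compact hs
  rw [← integral_complex_ofReal]
  simp_rw [← sum_sum_pow_mul_mul_conj]
  rw [integral_finsetSum _ fun j _ => integrable_finsetSum _ fun k _ => hint j k]
  refine Finset.sum_congr rfl fun j _ => ?_
  rw [integral_finsetSum _ fun k _ => hint j k]
  refine Finset.sum_congr rfl fun k _ => ?_
  rw [integral_mul_const, integral_mul_const, ← integral_complex_ofReal]
  norm_cast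

theorem stmt3_general (Λ : ℝ) (m : ℕ) (σ : StieltjesFunction ℝ)
    (b : ℕ → ℝ)
    (hb : ∀ k ≤ 2 * m, b k = ∫ t in Set.Icc (0:ℝ) Λ, t ^ k ∂σ.measure)
    (r : ℕ) (hr : r + 1 ≤ m) (ξ : Fin (r + 1) → ℂ)
    (h : ∑ j : Fin (r + 1), ∑ k : Fin (r + 1),
        (b ((j : ℕ) + (k : ℕ)) : ℂ) * ξ k * starRingEnd ℂ (ξ j) = 0) :
    ∑ j : Fin (r + 1), ∑ k : Fin (r + 1),
        (b ((j : ℕ) + (k : ℕ) + 2) : ℂ) * ξ k * starRingEnd ℂ (ξ j) = 0 := by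
  set P : ℝ → ℝ := fun t => ‖∑ k : Fin (r + 1), ξ k * (t : ℂ) ^ (k : ℕ)‖ ^ 2
  have hform : ∀ c ≤ 2, ∑ j : Fin (r + 1), ∑ k : Fin (r + 1),
      (b ((j : ℕ) + (k : ℕ) + c) : ℂ) * ξ k * conj (ξ j) =
        ((∫ t in Set.Icc 0 Λ, t ^ c * P t ∂σ.measure : ℝ) : ℂ) := by
    intro c hc
    rw [← hankelForm_eq_setIntegral σ.measure isCompact_Icc]
    refine Finset.sum_congr rfl fun j _ => Finset.sum_congr rfl fun k _ => ?_
    rw [hb _ (by omega)]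
  have hP : ∫ t in Set.Icc 0 Λ, P t ∂σ.measure = 0 := by
    simpa using (hform 0 (by norm_num)).symm.trans h
  rw [hform 2 le_rfl, setIntegral_mul_eq_zero_of_setIntegral_eq_zero (fun t => by positivity)
    ((by fun_prop : Continuous P).continuousOn.integrableOn_compact isCompact_Icc) hP,
    Complex.ofReal_zero]

theorem stmt3 (Λ : ℝ) (hΛ : 0 < Λ) (m : ℕ) (hm : 1 ≤ m) (σ : StieltjesFunction ℝ)
    (b : ℕ → ℝ)
    (hb : ∀ k ≤ 2 * m, b k = ∫ t in Set.Icc (0:ℝ) Λ, t ^ k ∂σ.measure)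
    (r : ℕ) (hr : r + 1 ≤ m) (ξ : Fin (r + 1) → ℂ)
    (h : ∑ j : Fin (r + 1), ∑ k : Fin (r + 1),
        (b ((j : ℕ) + (k : ℕ)) : ℂ) * ξ k * starRingEnd ℂ (ξ j) = 0) :
    ∑ j : Fin (r + 1), ∑ k : Fin (r + 1),
        (b ((j : ℕ) + (k : ℕ) + 2) : ℂ) * ξ k * starRingEnd ℂ (ξ j) = 0 :=
  stmt3_general Λ m σ b hb r hr ξ h
end

section
/- If σ is a non-decreasing function on [0, Λ] with moments b_k and ξ_0,…,ξ_r (r ≤ m−1) satisfy Σ_{j,k=0}^r b_{j+k+1} ξ_k conj(ξ_j) = 0, then Σ_{j,k=0}^r b_{j+k+2} ξ_k conj(ξ_j) = 0. -/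
/-!
With `p(t) = ∑ ξ_k t^k`, the form `∑ b_{j+k+c} ξ_k conj ξ_j` is `∫ t^c |p(t)|² dσ` over `[0, Λ]`.
For `c = 1` the integrand is nonnegative there, so a vanishing integral forces `t |p(t)|² = 0`
`σ`-a.e., and then `t² |p(t)|² = t · t |p(t)|²` vanishes a.e. as well.
-/

open MeasureTheory Finset ComplexConjugate

theorem sum_sum_pow_mul_conj {n : ℕ} (ξ : Fin n → ℂ) (c : ℕ) (t : ℝ) :
    ∑ j : Fin n, ∑ k : Fin n, (t : ℂ) ^ ((j : ℕ) + (k : ℕ) + c) * ξ k * conj (ξ j)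
      = ((t ^ c * Complex.normSq (∑ k : Fin n, ξ k * (t : ℂ) ^ (k : ℕ)) : ℝ) : ℂ) := by
  rw [Complex.ofReal_mul, Complex.ofReal_pow, ← Complex.mul_conj, map_sum, sum_mul_sum,
    mul_sum, sum_comm]
  refine sum_congr rfl fun j _ => ?_
  rw [mul_sum]
  refine sum_congr rfl fun k _ => ?_
  simp only [map_mul, map_pow, Complex.conj_ofReal]
  ring

theorem sum_sum_integral_pow_mul_conj {n : ℕ} (ξ : Fin n → ℂ) (c : ℕ) {μ : Measure ℝ}
    (hint : ∀ j k : Fin n, Integrable (fun t : ℝ => t ^ ((j : ℕ) + (k : ℕ) + c)) μ) :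
    ∑ j : Fin n, ∑ k : Fin n,
        ((∫ t, t ^ ((j : ℕ) + (k : ℕ) + c) ∂μ : ℝ) : ℂ) * ξ k * conj (ξ j)
      = ((∫ t, t ^ c * Complex.normSq (∑ k : Fin n, ξ k * (t : ℂ) ^ (k : ℕ)) ∂μ : ℝ) : ℂ) := by
  have hint' : ∀ j k : Fin n, Integrable
      (fun t : ℝ => (t : ℂ) ^ ((j : ℕ) + (k : ℕ) + c) * ξ k * conj (ξ j)) μ := fun j k => by
    simpa [mul_assoc] using
      (hint j k).ofReal (𝕜 := ℂ) |>.mul_const (ξ k * conj (ξ j))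
  calc ∑ j : Fin n, ∑ k : Fin n,
        ((∫ t, t ^ ((j : ℕ) + (k : ℕ) + c) ∂μ : ℝ) : ℂ) * ξ k * conj (ξ j)
      = ∑ j : Fin n, ∑ k : Fin n,
          ∫ t, (t : ℂ) ^ ((j : ℕ) + (k : ℕ) + c) * ξ k * conj (ξ j) ∂μ := by
        refine sum_congr rfl fun j _ => sum_congr rfl fun k _ => ?_
        rw [← integral_complex_ofReal, ← integral_mul_const, ← integral_mul_const]
        simp only [Complex.ofReal_pow]
    _ = ∫ t, ∑ j : Fin n, ∑ k : Fin n,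
          (t : ℂ) ^ ((j : ℕ) + (k : ℕ) + c) * ξ k * conj (ξ j) ∂μ := by
        rw [integral_finsetSum _ fun j _ => integrable_finsetSum _ fun k _ => hint' j k]
        exact sum_congr rfl fun j _ => (integral_finsetSum _ fun k _ => hint' j k).symm
    _ = _ := by
        simp only [sum_sum_pow_mul_conj]
        exact integral_complex_ofReal

theorem integral_mul_eq_zero_of_integral_eq_zero {α : Type*} [MeasurableSpace α] {μ : Measure α}
    {f : α → ℝ} (hf : 0 ≤ᵐ[μ] f) (hfi : Integrable f μ) (h0 : ∫ x, f x ∂μ = 0) (g : α → ℝ) :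
    ∫ x, g x * f x ∂μ = 0 := by
  have hf0 : f =ᵐ[μ] 0 := (integral_eq_zero_iff_of_nonneg_ae hf hfi).mp h0
  calc ∫ x, g x * f x ∂μ = ∫ _, (0 : ℝ) ∂μ :=
        integral_congr_ae (hf0.mono fun x hx => by simp [hx])
    _ = 0 := integral_zero _ _

theorem stmt4_general (Λ : ℝ) (m : ℕ) (σ : StieltjesFunction ℝ)
    (b : ℕ → ℝ)
    (hb : ∀ k ≤ 2 * m, b k = ∫ t in Set.Icc (0:ℝ) Λ, t ^ k ∂σ.measure)
    (r : ℕ) (hr : r + 1 ≤ m) (ξ : Fin (r + 1) → ℂ)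
    (h : ∑ j : Fin (r + 1), ∑ k : Fin (r + 1),
        (b ((j : ℕ) + (k : ℕ) + 1) : ℂ) * ξ k * starRingEnd ℂ (ξ j) = 0) :
    ∑ j : Fin (r + 1), ∑ k : Fin (r + 1),
        (b ((j : ℕ) + (k : ℕ) + 2) : ℂ) * ξ k * starRingEnd ℂ (ξ j) = 0 := by
  set μ := σ.measure.restrict (Set.Icc 0 Λ)
  set p : ℝ → ℂ := fun t => ∑ k : Fin (r + 1), ξ k * (t : ℂ) ^ (k : ℕ)
  have hmoment : ∀ c ≤ 2, ∑ j : Fin (r + 1), ∑ k : Fin (r + 1),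
      (b ((j : ℕ) + (k : ℕ) + c) : ℂ) * ξ k * conj (ξ j)
        = ((∫ t, t ^ c * Complex.normSq (p t) ∂μ : ℝ) : ℂ) := fun c hc => by
    rw [← sum_sum_integral_pow_mul_conj ξ c fun _ _ =>
      (continuous_pow _).continuousOn.integrableOn_compact isCompact_Icc]
    refine sum_congr rfl fun j _ => sum_congr rfl fun k _ => ?_
    rw [hb _ (by omega)]
  rw [hmoment 1 one_le_two] at h
  have hsecond := integral_mul_eq_zero_of_integral_eq_zero (μ := μ)
    (f := fun t => t ^ 1 * Complex.normSq (p t))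
    ((ae_restrict_mem measurableSet_Icc).mono fun t ht =>
      mul_nonneg (pow_nonneg ht.1 1) (Complex.normSq_nonneg _))
    ((by fun_prop : Continuous fun t : ℝ => t ^ 1 * Complex.normSq (p t)).continuousOn
      |>.integrableOn_compact isCompact_Icc)
    (by exact_mod_cast h) id
  rw [hmoment 2 le_rfl, ← Complex.ofReal_zero, ← hsecond]
  simp only [id, ← mul_assoc, ← pow_succ']

theorem stmt4 (Λ : ℝ) (hΛ : 0 < Λ) (m : ℕ) (hm : 1 ≤ m) (σ : StieltjesFunction ℝ)
    (b : ℕ → ℝ)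
    (hb : ∀ k ≤ 2 * m, b k = ∫ t in Set.Icc (0:ℝ) Λ, t ^ k ∂σ.measure)
    (r : ℕ) (hr : r + 1 ≤ m) (ξ : Fin (r + 1) → ℂ)
    (h : ∑ j : Fin (r + 1), ∑ k : Fin (r + 1),
        (b ((j : ℕ) + (k : ℕ) + 1) : ℂ) * ξ k * starRingEnd ℂ (ξ j) = 0) :
    ∑ j : Fin (r + 1), ∑ k : Fin (r + 1),
        (b ((j : ℕ) + (k : ℕ) + 2) : ℂ) * ξ k * starRingEnd ℂ (ξ j) = 0 :=
  stmt4_general Λ m σ b hb r hr ξ h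
end

section
/- Suppose σ is a purely atomic non-decreasing measure on [0,∞) with finitely many atoms at points t_1 < … < t_s with positive masses μ_1,…,μ_s, having moments b_k = ∫₀^∞ t^k dσ(t) for k ≤ 2m with s ≤ m. If t_s > Λ, then there exists a polynomial Q of degree ≤ m−1 such that Λ·Σ_{j,k=0}^{m-1} b_{j+k} η_k conj(η_j) − Σ_{j,k=0}^{m-1} b_{j+k+1} η_k conj(η_j) < 0, where η are the coefficients of Q. Consequently, if Λ·Γ_{m-1} − Γ_{m-1}^{(1)} is positive semidefinite, then all atoms lie in [0, Λ]. -/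
/-!
Every moment of `σ` needed is a finite sum over the atoms, so the quadratic form of
`Λ Γ_{m-1} - Γ_{m-1}^{(1)}` at the coefficient vector of a polynomial `p` of degree `< m` is
`∑ᵢ μᵢ (Λ - tᵢ) p(tᵢ)²`. Taking for `p` the Lagrange basis polynomial of an atom `t_{i₀} > Λ`
(degree `s - 1 < m`) kills every term but `μ_{i₀} (Λ - t_{i₀}) < 0`. Applied to any atom
beyond `Λ`, this contradicts positive semidefiniteness.
-/

open Finset Matrix Polynomial

theorem dotProduct_mulVec_moment_matrix {ι R : Type*} [Fintype ι] [CommSemiring R] {m : ℕ}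
    (w v : ι → R) (x : Fin m → R) :
    x ⬝ᵥ (Matrix.of fun j k : Fin m => ∑ i, w i * v i ^ ((j : ℕ) + (k : ℕ))) *ᵥ x
      = ∑ i, w i * (∑ k, x k * v i ^ (k : ℕ)) ^ 2 := by
  simp_rw [sq, sum_mul_sum, mul_sum]
  rw [sum_comm]
  simp only [dotProduct, mulVec, of_apply, mul_sum, sum_mul]
  refine sum_congr rfl fun j _ => ?_
  rw [sum_comm]
  refine sum_congr rfl fun k _ => sum_congr rfl fun i _ => ?_
  ring

theorem shifted_hankel_eq_moment_matrix {ι R : Type*} [Fintype ι] [CommRing R] {m : ℕ}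
    (Λ : R) (μ t : ι → R) (b : ℕ → R) (hb : ∀ n ≤ 2 * m, b n = ∑ i, μ i * t i ^ n) :
    (Matrix.of fun j k : Fin m => Λ * b ((j : ℕ) + (k : ℕ)) - b ((j : ℕ) + (k : ℕ) + 1))
      = Matrix.of fun j k : Fin m => ∑ i, μ i * (Λ - t i) * t i ^ ((j : ℕ) + (k : ℕ)) := by
  ext j k
  rw [of_apply, of_apply, hb _ (by omega), hb _ (by omega), mul_sum, ← sum_sub_distrib]
  refine sum_congr rfl fun i _ => ?_
  ring

theorem exists_dotProduct_shifted_hankel_mulVec_neg {ι : Type*} [Fintype ι] [DecidableEq ι]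
    {m : ℕ} (hcard : Fintype.card ι ≤ m) (Λ : ℝ) (μ t : ι → ℝ) (ht : Function.Injective t)
    (b : ℕ → ℝ) (hb : ∀ n ≤ 2 * m, b n = ∑ i, μ i * t i ^ n)
    {i₀ : ι} (hμ : 0 < μ i₀) (hΛ : Λ < t i₀) :
    ∃ x : Fin m → ℝ,
      x ⬝ᵥ (Matrix.of fun j k : Fin m =>
        Λ * b ((j : ℕ) + (k : ℕ)) - b ((j : ℕ) + (k : ℕ) + 1)) *ᵥ x < 0 := by
  set p := Lagrange.basis univ t i₀
  have hinj : Set.InjOn t (univ : Finset ι) := ht.injOn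
  have hdeg : p.natDegree < m := by
    rw [Lagrange.natDegree_basis hinj (mem_univ i₀), card_univ]
    have := Fintype.card_pos_iff.mpr ⟨i₀⟩
    omega
  have heval (i : ι) : ∑ k : Fin m, p.coeff k * t i ^ (k : ℕ) = if i = i₀ then 1 else 0 := by
    rw [Fin.sum_univ_eq_sum_range (fun k => p.coeff k * t i ^ k), ← eval_eq_sum_range' hdeg]
    split_ifs with h
    · exact h ▸ Lagrange.eval_basis_self hinj (mem_univ i₀)
    · exact Lagrange.eval_basis_of_ne (Ne.symm h) (mem_univ i)
  refine ⟨fun k => p.coeff k, ?_⟩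
  rw [shifted_hankel_eq_moment_matrix Λ μ t b hb, dotProduct_mulVec_moment_matrix]
  simp only [heval, ite_pow, one_pow, zero_pow two_ne_zero, mul_ite, mul_one, mul_zero,
    sum_ite_eq', mem_univ, if_true]
  exact mul_neg_of_pos_of_neg hμ (sub_neg.mpr hΛ)

theorem dotProduct_shifted_hankel_mulVec {R : Type*} [CommRing R] {m : ℕ} (Λ : R) (b : ℕ → R)
    (x : Fin m → R) :
    x ⬝ᵥ (Matrix.of fun j k : Fin m =>
        Λ * b ((j : ℕ) + (k : ℕ)) - b ((j : ℕ) + (k : ℕ) + 1)) *ᵥ x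
      = Λ * (∑ j : Fin m, ∑ k : Fin m, b ((j : ℕ) + (k : ℕ)) * x k * x j)
        - ∑ j : Fin m, ∑ k : Fin m, b ((j : ℕ) + (k : ℕ) + 1) * x k * x j := by
  simp only [dotProduct, mulVec, of_apply, mul_sum, ← sum_sub_distrib]
  refine sum_congr rfl fun j _ => sum_congr rfl fun k _ => ?_
  ring

theorem stmt5 (Λ : ℝ) (m s : ℕ) (hs : 1 ≤ s) (hsm : s ≤ m)
    (t : Fin s → ℝ) (ht : StrictMono t)
    (μ : Fin s → ℝ) (hμ : ∀ j, 0 < μ j)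
    (b : ℕ → ℝ) (hb : ∀ k ≤ 2 * m, b k = ∑ j, μ j * t j ^ k) :
    ((Λ < t ⟨s - 1, by omega⟩) →
      ∃ η : Fin m → ℂ,
        ((Λ : ℂ) * (∑ j : Fin m, ∑ k : Fin m,
            (b ((j : ℕ) + (k : ℕ)) : ℂ) * η k * starRingEnd ℂ (η j))
          - ∑ j : Fin m, ∑ k : Fin m,
            (b ((j : ℕ) + (k : ℕ) + 1) : ℂ) * η k * starRingEnd ℂ (η j)).re < 0)
    ∧ ((Matrix.of fun j k : Fin m =>
          Λ * b ((j : ℕ) + (k : ℕ)) - b ((j : ℕ) + (k : ℕ) + 1)).PosSemidef →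
        ∀ j, t j ≤ Λ) := by
  have hcard : Fintype.card (Fin s) ≤ m := by simpa using hsm
  constructor
  · intro hΛ
    obtain ⟨x, hx⟩ := exists_dotProduct_shifted_hankel_mulVec_neg hcard Λ μ t ht.injective b hb
      (hμ _) hΛ
    refine ⟨fun k => (x k : ℂ), ?_⟩
    rw [dotProduct_shifted_hankel_mulVec] at hx
    simpa only [Complex.conj_ofReal, ← Complex.ofReal_mul, ← Complex.ofReal_sum,
      ← Complex.ofReal_sub, Complex.ofReal_re] using hx
  · intro hpsd j
    by_contra! hj
    obtain ⟨x, hx⟩ := exists_dotProduct_shifted_hankel_mulVec_neg hcard Λ μ t ht.injective b hb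
      (hμ j) hj
    have := hpsd.dotProduct_mulVec_nonneg x
    rw [star_trivial] at this
    exact hx.not_ge this
end

section
/- If the Hankel matrix Γ_m = (b_{j+k})_{j,k=0}^m is positive definite and the implication 'Σ b_{j+k+1} ξ_k conj(ξ_j) = 0 ⇒ Σ b_{j+k+2} ξ_k conj(ξ_j) = 0' holds for all ξ with r ≤ m−1, and Γ_m^{(1)} = (b_{j+k+1})_{j,k=0}^{m-1} is positive semidefinite, then Γ_{m-1}^{(1)} is positive definite. -/
/-!
A nonzero real vector `x` isotropic for `Γ⁽¹⁾` would, by the hypothesis on `b`, also be isotropic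
for `Γ⁽²⁾`; but `Γ⁽²⁾` is the principal submatrix of the positive definite `Γ` obtained by deleting
its first row and column, so it is positive definite as well.
-/

open Matrix

theorem Matrix.PosSemidef.posDef_of_dotProduct_mulVec_eq_zero_imp {n R : Type*} [Fintype n]
    [Ring R] [PartialOrder R] [StarRing R] {A B : Matrix n n R} (hA : A.PosSemidef)
    (hB : B.PosDef) (h : ∀ x, star x ⬝ᵥ A *ᵥ x = 0 → star x ⬝ᵥ B *ᵥ x = 0) : A.PosDef := by
  refine .of_dotProduct_mulVec_pos hA.isHermitian fun x hx => ?_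
  refine (hA.dotProduct_mulVec_nonneg x).lt_of_ne fun hAx => ?_
  exact (hB.dotProduct_mulVec_pos hx).ne' (h x hAx.symm)

def hankel {R : Type*} (b : ℕ → R) (n : ℕ) : Matrix (Fin n) (Fin n) R :=
  Matrix.of fun j k => b (j + k)

theorem hankel_submatrix_succ {R : Type*} (b : ℕ → R) (n : ℕ) :
    (hankel b (n + 1)).submatrix Fin.succ Fin.succ = hankel (fun i => b (i + 2)) n := by
  ext j k
  simp only [hankel, submatrix_apply, of_apply, Fin.val_succ]
  congr 1
  omega

theorem ofReal_star_dotProduct_hankel_mulVec {n : ℕ} (b : ℕ → ℝ) (x : Fin n → ℝ) :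
    ((star x ⬝ᵥ hankel b n *ᵥ x : ℝ) : ℂ) =
      ∑ j : Fin n, ∑ k : Fin n, (b (j + k) : ℂ) * x k * starRingEnd ℂ (x j) := by
  simp only [star_trivial, dotProduct, mulVec, hankel, of_apply, Complex.conj_ofReal,
    Finset.mul_sum]
  push_cast
  refine Finset.sum_congr rfl fun j _ => Finset.sum_congr rfl fun k _ => ?_
  ring

theorem stmt7_general (m : ℕ) (b : ℕ → ℝ)
    (hΓ : (Matrix.of fun j k : Fin (m + 1) => b ((j : ℕ) + (k : ℕ))).PosDef)
    (himp : ∀ r : ℕ, r + 1 ≤ m → ∀ ξ : Fin (r + 1) → ℂ,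
        (∑ j : Fin (r + 1), ∑ k : Fin (r + 1),
          (b ((j : ℕ) + (k : ℕ) + 1) : ℂ) * ξ k * starRingEnd ℂ (ξ j) = 0) →
        ∑ j : Fin (r + 1), ∑ k : Fin (r + 1),
          (b ((j : ℕ) + (k : ℕ) + 2) : ℂ) * ξ k * starRingEnd ℂ (ξ j) = 0)
    (hΓ1 : (Matrix.of fun j k : Fin m => b ((j : ℕ) + (k : ℕ) + 1)).PosSemidef) :
    (Matrix.of fun j k : Fin m => b ((j : ℕ) + (k : ℕ) + 1)).PosDef := by
  have hΓ2 : (hankel (fun i => b (i + 2)) m).PosDef := by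
    rw [← hankel_submatrix_succ]
    exact hΓ.submatrix (Fin.succ_injective m)
  have hΓ1 : (hankel (fun i => b (i + 1)) m).PosSemidef := hΓ1
  refine hΓ1.posDef_of_dotProduct_mulVec_eq_zero_imp hΓ2 fun x hx => ?_
  cases m with
  | zero => simp
  | succ r =>
    have h1 := ofReal_star_dotProduct_hankel_mulVec (fun i => b (i + 1)) x
    have h2 := ofReal_star_dotProduct_hankel_mulVec (fun i => b (i + 2)) x
    rw [hx] at h1
    exact_mod_cast h2.trans (himp r le_rfl _ (by simpa using h1.symm))

theorem stmt7 (m : ℕ) (hm : 1 ≤ m) (b : ℕ → ℝ)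
    (hΓ : (Matrix.of fun j k : Fin (m + 1) => b ((j : ℕ) + (k : ℕ))).PosDef)
    (himp : ∀ r : ℕ, r + 1 ≤ m → ∀ ξ : Fin (r + 1) → ℂ,
        (∑ j : Fin (r + 1), ∑ k : Fin (r + 1),
          (b ((j : ℕ) + (k : ℕ) + 1) : ℂ) * ξ k * starRingEnd ℂ (ξ j) = 0) →
        ∑ j : Fin (r + 1), ∑ k : Fin (r + 1),
          (b ((j : ℕ) + (k : ℕ) + 2) : ℂ) * ξ k * starRingEnd ℂ (ξ j) = 0)
    (hΓ1 : (Matrix.of fun j k : Fin m => b ((j : ℕ) + (k : ℕ) + 1)).PosSemidef) :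
    (Matrix.of fun j k : Fin m => b ((j : ℕ) + (k : ℕ) + 1)).PosDef :=
  stmt7_general m b hΓ himp hΓ1
end

section
/- Let A₀₀ act on polynomials of degree ≤ m−1 by (A₀₀ q)(t) = t·q(t) − β_{m-1}⟨q, d_{m-1}⟩ d_m(t), where d_k are the orthonormal polynomials of a measure σ and β_{m-1} the recurrence coefficient. Then for z not a zero of d_m, the resolvent acts by ([A₀₀ − z]⁻¹ q)(t) = (1/(t−z))·[q(t) − (q(z)/d_m(z))·d_m(t)], i.e., applying A₀₀ − z to the right-hand side returns q. -/
/-!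
Write `c = q(z) / d_m(z)`, so that `(X - z) r = q - c d_m`; it remains to see that
`β ⟨r, d_{m-1}⟩ = -c`. Since `d_k` is orthogonal to all polynomials of degree `< k`,
`∫ p d_k dμ = coeff_k p / lc(d_k)` whenever `deg p ≤ k`. This gives
`β = lc(d_{m-1}) / lc(d_m)` and `⟨r, d_{m-1}⟩ = coeff_{m-1} r / lc(d_{m-1})`, while the coefficient of `t^m` in
`(t - z) r(t) = q(t) - c d_m(t)` gives `coeff_{m-1} r = -c lc(d_m)`.
-/

open MeasureTheory Polynomial

theorem integrable_eval_of_natDegree_le {μ : Measure ℝ} {N : ℕ}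
    (h : ∀ k ≤ N, Integrable (fun t : ℝ => t ^ k) μ) {p : ℝ[X]} (hp : p.natDegree ≤ N) :
    Integrable (fun t => p.eval t) μ := by
  simp_rw [eval_eq_sum_range' (Nat.lt_succ_of_le hp)]
  exact integrable_finsetSum _ fun j hj =>
    (h j (Nat.lt_succ_iff.mp (Finset.mem_range.mp hj))).const_mul _

namespace Polynomial

theorem natDegree_le_of_natDegree_X_sub_C_mul_le {R : Type*} [CommRing R] [IsDomain R]
    {z : R} {r : R[X]} {n : ℕ}
    (h : ((X - C z) * r).natDegree ≤ n + 1) : r.natDegree ≤ n := by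
  rcases eq_or_ne r 0 with rfl | hr
  · simp
  rw [natDegree_mul (X_sub_C_ne_zero z) hr, natDegree_X_sub_C] at h
  omega

theorem sub_C_mul_mem_degreeLT {K : Type*} [Field K] {p q : K[X]} {k : ℕ}
    (hp : p.natDegree ≤ k) (hq : q.natDegree = k) (hq0 : q ≠ 0) :
    p - C (p.coeff k / q.leadingCoeff) * q ∈ degreeLT K k := by
  rw [mem_degreeLT, degree_lt_iff_coeff_zero]
  intro i hi
  rcases hi.eq_or_lt with rfl | hlt
  · rw [coeff_sub, coeff_C_mul, ← hq, coeff_natDegree,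
      div_mul_cancel₀ _ (leadingCoeff_ne_zero.mpr hq0), sub_self]
  · rw [coeff_sub, coeff_C_mul, coeff_eq_zero_of_natDegree_lt (hp.trans_lt hlt),
      coeff_eq_zero_of_natDegree_lt (hq.trans_lt hlt), mul_zero, sub_zero]

/-- Only the terms up to `m` matter; the powers `X ^ i` just make it a `Sequence`. -/
noncomputable def Sequence.extendByXPow {R : Type*} [Semiring R] [Nontrivial R]
    (d : ℕ → R[X]) (m : ℕ) (hd : ∀ i ≤ m, (d i).degree = i) : Sequence R where
  elems' i := if i ≤ m then d i else X ^ i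
  degree_eq' i := by
    split_ifs with hi
    exacts [hd i hi, degree_X_pow i]

theorem span_image_Iio_eq_degreeLT {K : Type*} [Field K] {d : ℕ → K[X]} {m k : ℕ}
    (hd : ∀ i ≤ m, (d i).degree = i) (hk : k ≤ m + 1) :
    Submodule.span K (d '' Set.Iio k) = degreeLT K k := by
  set S := Sequence.extendByXPow d m hd
  have hdS : d '' Set.Iio k = S '' Set.Iio k :=
    Set.image_congr fun i hi => (if_pos (by simp at hi; omega)).symm
  rw [hdS, S.span_degreeLT fun i _ =>
    isUnit_iff_ne_zero.mpr (leadingCoeff_ne_zero.mpr (S.ne_zero i))]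

end Polynomial

structure IsOrthonormalPolynomials (μ : Measure ℝ) (m : ℕ) (d : ℕ → ℝ[X]) : Prop where
  integrable_pow : ∀ k ≤ 2 * m, Integrable (fun t : ℝ => t ^ k) μ
  natDegree_eq : ∀ k ≤ m, (d k).natDegree = k
  integral_mul : ∀ j ≤ m, ∀ k ≤ m,
    ∫ t, (d j).eval t * (d k).eval t ∂μ = if j = k then 1 else 0

namespace IsOrthonormalPolynomials

variable {μ : Measure ℝ} {m k : ℕ} {d : ℕ → ℝ[X]}

theorem ne_zero (hd : IsOrthonormalPolynomials μ m d) (hk : k ≤ m) : d k ≠ 0 := by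
  intro h
  simpa [h] using hd.integral_mul k hk k hk

theorem degree_eq (hd : IsOrthonormalPolynomials μ m d) (hk : k ≤ m) : (d k).degree = k := by
  rw [degree_eq_natDegree (hd.ne_zero hk), hd.natDegree_eq k hk]

theorem leadingCoeff_ne_zero (hd : IsOrthonormalPolynomials μ m d) (hk : k ≤ m) :
    (d k).leadingCoeff ≠ 0 :=
  Polynomial.leadingCoeff_ne_zero.mpr (hd.ne_zero hk)

theorem integrable_eval_mul (hd : IsOrthonormalPolynomials μ m d) {p : ℝ[X]}
    (hp : p.natDegree ≤ m) (hk : k ≤ m) :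
    Integrable (fun t => p.eval t * (d k).eval t) μ := by
  simpa only [eval_mul] using integrable_eval_of_natDegree_le hd.integrable_pow
    (natDegree_mul_le.trans (by rw [hd.natDegree_eq k hk]; omega))

theorem integral_eval_mul_eq_zero (hd : IsOrthonormalPolynomials μ m d) {p : ℝ[X]}
    (hp : p ∈ degreeLT ℝ k) (hk : k ≤ m) : ∫ t, p.eval t * (d k).eval t ∂μ = 0 := by
  rw [← span_image_Iio_eq_degreeLT (fun i hi => hd.degree_eq hi) (by omega),
    ← Finset.coe_range, Submodule.mem_span_image_finset_iff_exists_fun'] at hp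
  obtain ⟨c, rfl⟩ := hp
  simp only [eval_finsetSum, eval_smul, smul_eq_mul, Finset.sum_mul, mul_assoc]
  rw [integral_finsetSum]
  · refine Finset.sum_eq_zero fun i hi => ?_
    have hik : i < k := Finset.mem_range.mp hi
    rw [integral_const_mul, hd.integral_mul i (by omega) k hk, if_neg hik.ne, mul_zero]
  · intro i hi
    have hik : i < k := Finset.mem_range.mp hi
    have hi_deg : (d i).natDegree ≤ m := by rw [hd.natDegree_eq i (by omega)]; omega
    exact (hd.integrable_eval_mul hi_deg hk).const_mul _

theorem integral_eval_mul (hd : IsOrthonormalPolynomials μ m d) {p : ℝ[X]}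
    (hp : p.natDegree ≤ k) (hk : k ≤ m) :
    ∫ t, p.eval t * (d k).eval t ∂μ = p.coeff k / (d k).leadingCoeff := by
  set c := p.coeff k / (d k).leadingCoeff
  have hlow := sub_C_mul_mem_degreeLT hp (hd.natDegree_eq k hk) (hd.ne_zero hk)
  calc ∫ t, p.eval t * (d k).eval t ∂μ
      = ∫ t, (p - C c * d k).eval t * (d k).eval t + c * ((d k).eval t * (d k).eval t) ∂μ := by
        congr 1; funext t; simp only [eval_sub, eval_mul, eval_C]; ring
    _ = c := by
        rw [integral_add, integral_const_mul, hd.integral_eval_mul_eq_zero hlow hk,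
          hd.integral_mul k hk k hk, if_pos rfl, zero_add, mul_one]
        · exact hd.integrable_eval_mul
            ((natDegree_le_iff_degree_le.mpr (mem_degreeLT.mp hlow).le).trans hk) hk
        · exact (hd.integrable_eval_mul ((hd.natDegree_eq k hk).le.trans hk) hk).const_mul _

theorem integral_X_mul_eval_mul {n : ℕ} (hd : IsOrthonormalPolynomials μ m d)
    (hn : n + 1 ≤ m) :
    ∫ t, t * (d n).eval t * (d (n + 1)).eval t ∂μ
      = (d n).leadingCoeff / (d (n + 1)).leadingCoeff := by
  have hXd : (X * d n).natDegree = n + 1 := by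
    rw [natDegree_mul X_ne_zero (hd.ne_zero (by omega)), natDegree_X,
      hd.natDegree_eq n (by omega), add_comm]
  simpa only [eval_mul, eval_X, coeff_X_mul, leadingCoeff, hd.natDegree_eq n (by omega : n ≤ m)]
    using hd.integral_eval_mul hXd.le hn

theorem integral_complex_eval_mul (hd : IsOrthonormalPolynomials μ m d) {r : ℂ[X]}
    (hr : r.natDegree ≤ k) (hk : k ≤ m) :
    ∫ t, r.eval (t : ℂ) * (((d k).eval t : ℝ) : ℂ) ∂μ = r.coeff k / (d k).leadingCoeff := by
  have expand : ∀ t : ℝ, r.eval (t : ℂ) * (((d k).eval t : ℝ) : ℂ)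
      = ∑ j ∈ Finset.range (k + 1), r.coeff j * (((X ^ j).eval t * (d k).eval t : ℝ) : ℂ) := by
    intro t
    rw [eval_eq_sum_range' (Nat.lt_succ_of_le hr), Finset.sum_mul]
    refine Finset.sum_congr rfl fun j _ => ?_
    simp only [eval_pow, eval_X]
    push_cast
    ring
  simp_rw [expand]
  rw [integral_finsetSum]
  · rw [Finset.sum_congr rfl fun j hj => by
      rw [integral_const_mul, integral_complex_ofReal,
        hd.integral_eval_mul ((natDegree_X_pow_le j).trans (Finset.mem_range_succ_iff.mp hj)) hk]]
    simp [coeff_X_pow, apply_ite, div_eq_mul_inv]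
  · intro j hj
    have hj_deg : (X ^ j : ℝ[X]).natDegree ≤ m :=
      (natDegree_X_pow_le j).trans (by rw [Finset.mem_range] at hj; omega)
    exact (hd.integrable_eval_mul hj_deg hk).ofReal.const_mul _

end IsOrthonormalPolynomials

theorem stmt19_general (m : ℕ) (hm : 1 ≤ m) (μ : Measure ℝ)
    (hint : ∀ k ≤ 2 * m, Integrable (fun t : ℝ => t ^ k) μ)
    (d : ℕ → Polynomial ℝ)
    (hdeg : ∀ k ≤ m, (d k).natDegree = k)
    (horth : ∀ j ≤ m, ∀ k ≤ m,
        (∫ t, (d j).eval t * (d k).eval t ∂μ) = if j = k then 1 else 0)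
    (β : ℝ) (hβ : β = ∫ t, t * (d (m - 1)).eval t * (d m).eval t ∂μ)
    (z : ℂ)
    (q : Polynomial ℂ) (hq : q.natDegree ≤ m - 1)
    (r : Polynomial ℂ)
    (hr : q - Polynomial.C (Polynomial.eval z q / Polynomial.aeval z (d m)) *
            (d m).map (algebraMap ℝ ℂ)
          = (Polynomial.X - Polynomial.C z) * r) :
    Polynomial.X * r
      - Polynomial.C ((β : ℂ) *
          ∫ t, Polynomial.eval (t : ℂ) r * (((d (m - 1)).eval t : ℝ) : ℂ) ∂μ) *
        (d m).map (algebraMap ℝ ℂ)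
      - Polynomial.C z * r = q := by
  obtain ⟨n, rfl⟩ : ∃ n, m = n + 1 := ⟨m - 1, by omega⟩
  simp only [Nat.add_sub_cancel] at hβ hq ⊢
  have hd : IsOrthonormalPolynomials μ (n + 1) d := ⟨hint, hdeg, horth⟩
  set c := eval z q / aeval z (d (n + 1))
  set D := (d (n + 1)).map (algebraMap ℝ ℂ)
  have hD : D.natDegree = n + 1 := by
    rw [natDegree_map_eq_of_injective (algebraMap ℝ ℂ).injective, hdeg (n + 1) le_rfl]
  have hr_deg : r.natDegree ≤ n := natDegree_le_of_natDegree_X_sub_C_mul_le <| hr ▸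
    (natDegree_sub_le _ _).trans (max_le (by omega) ((natDegree_C_mul_le _ _).trans hD.le))
  have hr_coeff : r.coeff n = -(c * (d (n + 1)).leadingCoeff) := by
    have h := congrArg (coeff · (n + 1)) hr
    simp only [coeff_sub, coeff_C_mul, coeff_X_sub_C_mul, D, coeff_map,
      coeff_eq_zero_of_natDegree_lt (hq.trans_lt n.lt_succ_self),
      coeff_eq_zero_of_natDegree_lt (hr_deg.trans_lt n.lt_succ_self), mul_zero, sub_zero,
      zero_sub] at h
    rw [← h, leadingCoeff, hdeg (n + 1) le_rfl]
    rfl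
  have hβ_integral : (β : ℂ) * ∫ t, eval (t : ℂ) r * (((d n).eval t : ℝ) : ℂ) ∂μ = -c := by
    rw [hβ, hd.integral_X_mul_eval_mul le_rfl, hd.integral_complex_eval_mul hr_deg (by omega),
      hr_coeff]
    have h₀ : ((d n).leadingCoeff : ℂ) ≠ 0 := mod_cast hd.leadingCoeff_ne_zero (by omega)
    have h₁ : ((d (n + 1)).leadingCoeff : ℂ) ≠ 0 := mod_cast hd.leadingCoeff_ne_zero le_rfl
    push_cast
    field_simp
  rw [hβ_integral, map_neg, neg_mul, sub_neg_eq_add]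
  linear_combination -hr

theorem stmt19 (m : ℕ) (hm : 1 ≤ m) (μ : Measure ℝ)
    (hint : ∀ k ≤ 2 * m, Integrable (fun t : ℝ => t ^ k) μ)
    (d : ℕ → Polynomial ℝ)
    (hdeg : ∀ k ≤ m, (d k).natDegree = k)
    (hlead : ∀ k ≤ m, 0 < (d k).leadingCoeff)
    (horth : ∀ j ≤ m, ∀ k ≤ m,
        (∫ t, (d j).eval t * (d k).eval t ∂μ) = if j = k then 1 else 0)
    (β : ℝ) (hβ : β = ∫ t, t * (d (m - 1)).eval t * (d m).eval t ∂μ)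
    (z : ℂ) (hz : Polynomial.aeval z (d m) ≠ 0)
    (q : Polynomial ℂ) (hq : q.natDegree ≤ m - 1)
    (r : Polynomial ℂ)
    (hr : q - Polynomial.C (Polynomial.eval z q / Polynomial.aeval z (d m)) *
            (d m).map (algebraMap ℝ ℂ)
          = (Polynomial.X - Polynomial.C z) * r) :
    Polynomial.X * r
      - Polynomial.C ((β : ℂ) *
          ∫ t, Polynomial.eval (t : ℂ) r * (((d (m - 1)).eval t : ℝ) : ℂ) ∂μ) *
        (d m).map (algebraMap ℝ ℂ)
      - Polynomial.C z * r = q :=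
  stmt19_general m hm μ hint d hdeg horth β hβ z q hq r hr
end
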